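/- In the inclusive setup with N independent baths, the reinitialization entropy production equals the multi-information among the system of interest and all baths at the final time plus the sum of the Kullback–Leibler divergences of each final bath marginal from its initial distribution: σ̄ = [H(p_τ) + Σ_{i=1}^N H(ρ_τ^i) − H(P_τ)] + Σ_{i=1}^N D(ρ_τ^i ‖ ρ₀^i). -/

import Mathlib

open scoped BigOperators

attribute [local instance] Classical.propDecidable

/-- Shannon entropy (natural log) of a distribution on a finite type. -/
noncomputable def shannonH {U : Type*} [Fintype U] (p : U → ℝ) : ℝ :=
  -∑ u, p u * Real.log (p u)

/-- Kullback–Leibler divergence between two distributions on a finite type. -/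
noncomputable def klDiv {U : Type*} [Fintype U] (p q : U → ℝ) : ℝ :=
  ∑ u, p u * Real.log (p u / q u)

/-! The entropy of a bijective pushforward of a product distribution is the sum of the entropies
of the factors. Expanding the heat flow with `B i = -log ρ₀ⁱ` and each divergence as cross entropy
minus entropy, both sides of the identity reduce to `H(p_τ) - H(P_τ) - ∑ᵢ ∑ᵥ ρ_τⁱ(v) log ρ₀ⁱ(v)`. -/

open Finset Real

section Entropy

variable {α β : Type*} [Fintype α] [Fintype β]

lemma shannonH_eq_sum_negMulLog (p : α → ℝ) : shannonH p = ∑ a, negMulLog (p a) := by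
  simp [shannonH, negMulLog, sum_neg_distrib]

lemma shannonH_comp_equiv (p : β → ℝ) (e : α ≃ β) : shannonH (p ∘ e) = shannonH p := by
  simp only [shannonH, Function.comp_apply, e.sum_comp (fun b => p b * log (p b))]

lemma shannonH_prod_mul {p : α → ℝ} {q : β → ℝ} (hp : ∑ a, p a = 1) (hq : ∑ b, q b = 1) :
    shannonH (fun x : α × β => p x.1 * q x.2) = shannonH p + shannonH q := by
  simp only [shannonH_eq_sum_negMulLog, Fintype.sum_prod_type, negMulLog_mul, sum_add_distrib,
    ← mul_sum, ← sum_mul, hp, hq, one_mul]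

lemma klDiv_eq_neg_shannonH_sub {p q : α → ℝ} (hq : ∀ a, q a ≠ 0) :
    klDiv p q = -shannonH p - ∑ a, p a * log (q a) := by
  rw [klDiv, shannonH, neg_neg, ← sum_sub_distrib]
  refine sum_congr rfl fun a _ => ?_
  rcases eq_or_ne (p a) 0 with hpa | hpa
  · simp [hpa]
  · rw [log_div hpa (hq a), mul_sub]

lemma mul_log_prod {ι : Type*} (s : Finset ι) (x : ι → ℝ) :
    (∏ i ∈ s, x i) * log (∏ i ∈ s, x i) = ∑ i ∈ s, (∏ j ∈ s, x j) * log (x i) := by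
  by_cases hx : ∀ i ∈ s, x i ≠ 0
  · rw [log_prod hx, mul_sum]
  · push Not at hx
    obtain ⟨i, hi, hxi⟩ := hx
    simp [prod_eq_zero hi hxi]

end Entropy

section PiProduct

variable {ι : Type*} [Fintype ι] [DecidableEq ι] {V : ι → Type*} [∀ i, Fintype (V i)]

lemma sum_pi_prod_mul_apply {ρ : ∀ i, V i → ℝ} (hρ : ∀ j, ∑ v, ρ j v = 1)
    (g : ∀ i, V i → ℝ) (i : ι) :
    ∑ vs : ∀ j, V j, (∏ j, ρ j (vs j)) * g i (vs i) = ∑ v, ρ i v * g i v := by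
  -- Fold `g i` into the `i`-th factor, then expand the product of sums.
  set f : ∀ j, V j → ℝ := fun j v => ρ j v * if j = i then g j v else 1
  have hf : ∀ vs : ∀ j, V j, ∏ j, f j (vs j) = (∏ j, ρ j (vs j)) * g i (vs i) := fun vs => by
    rw [prod_mul_distrib, Fintype.prod_ite_eq' i fun j => g j (vs j)]
  calc ∑ vs : ∀ j, V j, (∏ j, ρ j (vs j)) * g i (vs i)
      = ∑ vs : ∀ j, V j, ∏ j, f j (vs j) := sum_congr rfl fun vs _ => (hf vs).symm
    _ = ∏ j, ∑ v, f j v := (Fintype.prod_sum f).symm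
    _ = ∑ v, ρ i v * g i v := by
        rw [Fintype.prod_eq_single i fun j hj => by simp [f, hj, hρ j]]
        simp [f]

lemma shannonH_pi_prod {ρ : ∀ i, V i → ℝ} (hρ : ∀ j, ∑ v, ρ j v = 1) :
    shannonH (fun vs : ∀ i, V i => ∏ i, ρ i (vs i)) = ∑ i, shannonH (ρ i) := by
  simp only [shannonH, mul_log_prod, sum_neg_distrib]
  rw [sum_comm]
  exact congrArg Neg.neg <|
    sum_congr rfl fun i _ => sum_pi_prod_mul_apply hρ (fun j v => log (ρ j v)) i

end PiProduct

theorem rep_eq_multiInfo_add_sum_klDiv_general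
    {N : ℕ} {U : Type*} [Fintype U] {V : Fin N → Type*} [∀ i, Fintype (V i)]
    (p0 : U → ℝ) (ρ0 : ∀ i, V i → ℝ)
    (hp0sum : ∑ u, p0 u = 1)
    (hρ0 : ∀ i v, 0 < ρ0 i v) (hρ0sum : ∀ i, ∑ v, ρ0 i v = 1)
    (F : (U × (∀ i, V i)) ≃ (U × (∀ i, V i)))
    (Pτ : U × (∀ i, V i) → ℝ)
    (hPτ : ∀ x, Pτ x = p0 (F.symm x).1 * ∏ i, ρ0 i ((F.symm x).2 i))
    (pτ : U → ℝ)
    (ρτ : ∀ i, V i → ℝ)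
    (B : ∀ i, V i → ℝ) (hB : ∀ i v, B i v = -Real.log (ρ0 i v))
    (Qbar : ℝ)
    (hQbar : Qbar = ∑ i, ((∑ v, ρ0 i v * B i v) - ∑ v, ρτ i v * B i v))
    (σbar : ℝ) (hσbar : σbar = (shannonH pτ - shannonH p0) - Qbar) :
    σbar = (shannonH pτ + (∑ i, shannonH (ρτ i)) - shannonH Pτ)
      + ∑ i, klDiv (ρτ i) (ρ0 i) := by
  have hρ0prod : ∑ vs : ∀ i, V i, ∏ i, ρ0 i (vs i) = 1 := by
    simp [← Fintype.prod_sum, hρ0sum]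
  have hHPτ : shannonH Pτ = shannonH p0 + ∑ i, shannonH (ρ0 i) := by
    rw [show Pτ = (fun x => p0 x.1 * ∏ i, ρ0 i (x.2 i)) ∘ F.symm from funext hPτ,
      shannonH_comp_equiv, shannonH_prod_mul hp0sum hρ0prod, shannonH_pi_prod hρ0sum]
  have hQ : Qbar = ∑ i, (shannonH (ρ0 i) + ∑ v, ρτ i v * log (ρ0 i v)) := by
    simp only [hQbar, hB, shannonH, mul_neg, sum_neg_distrib, sub_neg_eq_add]
  simp only [hσbar, hQ, hHPτ, klDiv_eq_neg_shannonH_sub fun v => (hρ0 _ v).ne', sum_add_distrib,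
    sum_sub_distrib, sum_neg_distrib]
  ring

/-- In the inclusive setup with N independent baths, the reinitialization entropy
production equals the multi-information among the SOI and all baths at the final
time plus the sum of the KL divergences of each final bath marginal from its
initial distribution. -/
theorem rep_eq_multiInfo_add_sum_klDiv
    {N : ℕ} {U : Type*} [Fintype U] {V : Fin N → Type*} [∀ i, Fintype (V i)]
    (p0 : U → ℝ) (ρ0 : ∀ i, V i → ℝ)
    (hp0 : ∀ u, 0 ≤ p0 u) (hp0sum : ∑ u, p0 u = 1)
    (hρ0 : ∀ i v, 0 < ρ0 i v) (hρ0sum : ∀ i, ∑ v, ρ0 i v = 1)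
    (F : (U × (∀ i, V i)) ≃ (U × (∀ i, V i)))
    (Pτ : U × (∀ i, V i) → ℝ)
    (hPτ : ∀ x, Pτ x = p0 (F.symm x).1 * ∏ i, ρ0 i ((F.symm x).2 i))
    (pτ : U → ℝ) (hpτ : ∀ u, pτ u = ∑ vs : ∀ i, V i, Pτ (u, vs))
    (ρτ : ∀ i, V i → ℝ)
    (hρτ : ∀ i v, ρτ i v = ∑ x : U × (∀ j, V j), if x.2 i = v then Pτ x else 0)
    (B : ∀ i, V i → ℝ) (hB : ∀ i v, B i v = -Real.log (ρ0 i v))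
    (Qbar : ℝ)
    (hQbar : Qbar = ∑ i, ((∑ v, ρ0 i v * B i v) - ∑ v, ρτ i v * B i v))
    (σbar : ℝ) (hσbar : σbar = (shannonH pτ - shannonH p0) - Qbar) :
    σbar = (shannonH pτ + (∑ i, shannonH (ρτ i)) - shannonH Pτ)
      + ∑ i, klDiv (ρτ i) (ρ0 i) :=
  rep_eq_multiInfo_add_sum_klDiv_general p0 ρ0 hp0sum hρ0 hρ0sum F Pτ hPτ pτ ρτ B hB Qbar hQbar σbar
    hσbar
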